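/- arXiv:2410.13205 — 3 statements merged into one kernel-verified Lean document; each statement's English description precedes it below -/
import Mathlib

section
/- Let δ ≥ 1 be a real number, k ≥ 1 an integer, and let f be a smooth function on (0,∞)×ℝ³×ℝ³. Then at every point (t,x,v) with t > 0, the commutator of the free-transport operator T with the k-th power of the vector field H_δ satisfies [T, H_δ^k]f(t,x,v) = T(H_δ^k f)(t,x,v) − H_δ^k(Tf)(t,x,v) = δ k t^{δ−1} ∂_{v₁}(H_δ^{k−1} f)(t,x,v), where H_δ^0 is the identity. -/
/-- A point `(t, x, v) ∈ ℝ × ℝ³ × ℝ³` of phase space (with time). -/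
abbrev PhasePt : Type := ℝ × (Fin 3 → ℝ) × (Fin 3 → ℝ)

/-- The partial derivative `∂ₜ f` in the time variable. -/
noncomputable def pT (f : PhasePt → ℝ) (p : PhasePt) : ℝ :=
  fderiv ℝ f p (1, 0, 0)

/-- The partial derivative `∂_{xᵢ} f` in the `i`-th spatial variable. -/
noncomputable def pX (i : Fin 3) (f : PhasePt → ℝ) (p : PhasePt) : ℝ :=
  fderiv ℝ f p (0, Pi.single i 1, 0)

/-- The partial derivative `∂_{vᵢ} f` in the `i`-th velocity variable. -/
noncomputable def pV (i : Fin 3) (f : PhasePt → ℝ) (p : PhasePt) : ℝ :=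
  fderiv ℝ f p (0, 0, Pi.single i 1)

/-- The free-transport operator `T f = ∂ₜ f + v ⋅ ∂ₓ f`. -/
noncomputable def transportOp (f : PhasePt → ℝ) (p : PhasePt) : ℝ :=
  pT f p + ∑ i : Fin 3, p.2.2 i * pX i f p

/-- The vector field `H_δ f = (t^{δ+1}/(δ+1)) ∂_{x₁} f + t^δ ∂_{v₁} f`
(with `t^δ` the real power). -/
noncomputable def Hfield (δ : ℝ) (f : PhasePt → ℝ) (p : PhasePt) : ℝ :=
  p.1 ^ (δ + 1) / (δ + 1) * pX 0 f p + p.1 ^ δ * pV 0 f p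

open scoped ContDiff Topology

namespace CommAux

/-- directional derivative -/
noncomputable def pd (w : PhasePt) (f : PhasePt → ℝ) (p : PhasePt) : ℝ :=
  fderiv ℝ f p w

def eT : PhasePt := (1, 0, 0)
def eX (i : Fin 3) : PhasePt := (0, Pi.single i 1, 0)
def eV (i : Fin 3) : PhasePt := (0, 0, Pi.single i 1)

def posT : Set PhasePt := {p | 0 < p.1}

lemma isOpen_posT : IsOpen posT := isOpen_lt continuous_const continuous_fst

lemma mem_nhds {p : PhasePt} (hp : p ∈ posT) : posT ∈ 𝓝 p := isOpen_posT.mem_nhds hp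

lemma one_le_inf : (1 : WithTop ℕ∞) ≤ ∞ := by
  rw [show (1 : WithTop ℕ∞) = ((1:ℕ∞) : WithTop ℕ∞) by rfl]
  exact_mod_cast (le_top : (1:ℕ∞) ≤ ⊤)

lemma two_le_inf : (2 : WithTop ℕ∞) ≤ ∞ := by
  rw [show (2 : WithTop ℕ∞) = ((2:ℕ∞) : WithTop ℕ∞) by rfl]
  exact_mod_cast (le_top : (2:ℕ∞) ≤ ⊤)

lemma contDiffOn_pd (w : PhasePt) {f : PhasePt → ℝ} (hf : ContDiffOn ℝ ∞ f posT) :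
    ContDiffOn ℝ ∞ (pd w f) posT :=
  (hf.fderiv_of_isOpen (m := ∞) isOpen_posT (by simp)).clm_apply contDiffOn_const

lemma diffAt {g : PhasePt → ℝ} {p : PhasePt} (hg : ContDiffOn ℝ ∞ g posT) (hp : p ∈ posT) :
    DifferentiableAt ℝ g p :=
  (hg.contDiffAt (mem_nhds hp)).differentiableAt (by simp)

lemma contDiffOn_rpowFst (r : ℝ) : ContDiffOn ℝ ∞ (fun p : PhasePt => p.1 ^ r) posT :=
  fun p hp =>
    ((Real.contDiffAt_rpow_const_of_ne (ne_of_gt hp)).comp p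
      contDiff_fst.contDiffAt).contDiffWithinAt

lemma hasFDerivAt_rpowFst {p : PhasePt} (hp : 0 < p.1) (r : ℝ) :
    HasFDerivAt (fun q : PhasePt => q.1 ^ r)
      ((r * p.1 ^ (r - 1)) • (ContinuousLinearMap.fst ℝ ℝ ((Fin 3 → ℝ) × (Fin 3 → ℝ)))) p :=
  (Real.hasDerivAt_rpow_const (Or.inl (ne_of_gt hp))).comp_hasFDerivAt p hasFDerivAt_fst

lemma diffAt_rpowFst {p : PhasePt} (hp : 0 < p.1) (r : ℝ) :
    DifferentiableAt ℝ (fun q : PhasePt => q.1 ^ r) p :=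
  (hasFDerivAt_rpowFst hp r).differentiableAt

lemma pd_rpowFst {p : PhasePt} (hp : 0 < p.1) (r : ℝ) (w : PhasePt) :
    pd w (fun q : PhasePt => q.1 ^ r) p = r * p.1 ^ (r - 1) * w.1 := by
  rw [pd, (hasFDerivAt_rpowFst hp r).fderiv]
  simp [mul_comm]

noncomputable def coordV (i : Fin 3) : PhasePt →L[ℝ] ℝ :=
  (ContinuousLinearMap.proj i).comp
    ((ContinuousLinearMap.snd ℝ (Fin 3 → ℝ) (Fin 3 → ℝ)).comp
      (ContinuousLinearMap.snd ℝ ℝ ((Fin 3 → ℝ) × (Fin 3 → ℝ))))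

lemma pd_coordV (i : Fin 3) (w p : PhasePt) : pd w (fun q : PhasePt => q.2.2 i) p = w.2.2 i := by
  rw [pd, show (fun q : PhasePt => q.2.2 i) = ⇑(coordV i) from rfl, (coordV i).fderiv]
  rfl

lemma diffAt_coordV (i : Fin 3) (p : PhasePt) :
    DifferentiableAt ℝ (fun q : PhasePt => q.2.2 i) p :=
  (coordV i).differentiableAt

lemma pd_add {a b : PhasePt → ℝ} {p : PhasePt} (ha : DifferentiableAt ℝ a p)
    (hb : DifferentiableAt ℝ b p) (w : PhasePt) :
    pd w (fun q => a q + b q) p = pd w a p + pd w b p := by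
  rw [pd, fderiv_fun_add ha hb]; rfl

lemma pd_mul {a b : PhasePt → ℝ} {p : PhasePt} (ha : DifferentiableAt ℝ a p)
    (hb : DifferentiableAt ℝ b p) (w : PhasePt) :
    pd w (fun q => a q * b q) p = pd w a p * b p + a p * pd w b p := by
  rw [pd, fderiv_fun_mul ha hb]
  simp [pd]; ring

lemma pd_congr_on {u w : PhasePt → ℝ} {p : PhasePt} (hp : p ∈ posT)
    (h : ∀ q ∈ posT, u q = w q) (e : PhasePt) : pd e u p = pd e w p := by
  have : u =ᶠ[𝓝 p] w := Filter.eventuallyEq_of_mem (mem_nhds hp) h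
  rw [pd, pd, this.fderiv_eq]

lemma pd_comm {g : PhasePt → ℝ} {p : PhasePt} (hg : ContDiffOn ℝ ∞ g posT) (hp : p ∈ posT)
    (w w' : PhasePt) : pd w (pd w' g) p = pd w' (pd w g) p := by
  have hF : DifferentiableAt ℝ (fderiv ℝ g) p :=
    ((hg.fderiv_of_isOpen (m := ∞) isOpen_posT (by simp)).contDiffAt (mem_nhds hp)).differentiableAt
      (by simp)
  have key : ∀ a b : PhasePt, pd a (pd b g) p = fderiv ℝ (fderiv ℝ g) p a b := by
    intro a b
    have : pd b g = fun q => (fderiv ℝ g q) b := rfl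
    rw [pd, this, fderiv_clm_apply hF (differentiableAt_const b)]
    simp
  rw [key, key]
  exact (hg.contDiffAt (mem_nhds hp)).isSymmSndFDerivAt (by rw [minSmoothness_of_isRCLikeNormedField]; exact two_le_inf) w w'

/-! ### Expansions of the two operators in terms of `pd` -/

lemma Hfield_eq (δ : ℝ) (g : PhasePt → ℝ) :
    Hfield δ g = fun q => q.1 ^ (δ + 1) / (δ + 1) * pd (eX 0) g q + q.1 ^ δ * pd (eV 0) g q :=
  rfl

lemma transportOp_eq (g : PhasePt → ℝ) :
    transportOp g = fun q => pd eT g q +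
      (q.2.2 0 * pd (eX 0) g q + q.2.2 1 * pd (eX 1) g q + q.2.2 2 * pd (eX 2) g q) := by
  funext q
  rw [transportOp, Fin.sum_univ_three]
  rfl

lemma contDiffOn_H (δ : ℝ) {g : PhasePt → ℝ} (hg : ContDiffOn ℝ ∞ g posT) :
    ContDiffOn ℝ ∞ (Hfield δ g) posT := by
  rw [Hfield_eq]
  exact (((contDiffOn_rpowFst (δ+1)).div_const _).mul (contDiffOn_pd _ hg)).add
    ((contDiffOn_rpowFst δ).mul (contDiffOn_pd _ hg))

lemma contDiffOn_T {g : PhasePt → ℝ} (hg : ContDiffOn ℝ ∞ g posT) :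
    ContDiffOn ℝ ∞ (transportOp g) posT := by
  rw [transportOp_eq]
  refine (contDiffOn_pd eT hg).add (ContDiffOn.add (ContDiffOn.add ?_ ?_) ?_) <;>
    exact ((coordV _).contDiff.contDiffOn).mul (contDiffOn_pd _ hg)

lemma pd_Hfield (δ : ℝ) (hδ1 : δ + 1 ≠ 0) {g : PhasePt → ℝ} {p : PhasePt}
    (hg : ContDiffOn ℝ ∞ g posT) (hp : p ∈ posT) (w : PhasePt) :
    pd w (Hfield δ g) p
      = p.1 ^ δ * w.1 * pd (eX 0) g p + p.1 ^ (δ + 1) / (δ + 1) * pd w (pd (eX 0) g) p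
        + δ * p.1 ^ (δ - 1) * w.1 * pd (eV 0) g p + p.1 ^ δ * pd w (pd (eV 0) g) p := by
  have hp1 : (0:ℝ) < p.1 := hp
  have dX : DifferentiableAt ℝ (pd (eX 0) g) p := diffAt (contDiffOn_pd _ hg) hp
  have dV : DifferentiableAt ℝ (pd (eV 0) g) p := diffAt (contDiffOn_pd _ hg) hp
  have dc1 : DifferentiableAt ℝ (fun q : PhasePt => q.1 ^ (δ+1) / (δ+1)) p :=
    by simp only [div_eq_mul_inv]; exact (diffAt_rpowFst hp1 (δ+1)).mul_const _
  have dc2 : DifferentiableAt ℝ (fun q : PhasePt => q.1 ^ δ) p := diffAt_rpowFst hp1 δ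
  have e1 : pd w (fun q : PhasePt => q.1 ^ (δ+1) / (δ+1)) p = p.1 ^ δ * w.1 := by
    simp only [div_eq_mul_inv]
    rw [pd_mul (diffAt_rpowFst hp1 (δ+1)) (differentiableAt_const _) w,
      pd_rpowFst hp1 (δ+1) w]
    have hz : pd w (fun _ : PhasePt => (δ+1)⁻¹) p = 0 := by
      rw [pd, fderiv_fun_const]; rfl
    rw [hz, show δ + 1 - 1 = δ by ring]
    field_simp
    ring
  have e2 : pd w (fun q : PhasePt => q.1 ^ δ) p = δ * p.1 ^ (δ-1) * w.1 := pd_rpowFst hp1 δ w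
  rw [Hfield_eq]
  rw [pd_add (a := fun q => q.1 ^ (δ+1) / (δ+1) * pd (eX 0) g q)
    (b := fun q => q.1 ^ δ * pd (eV 0) g q) (dc1.mul dX) (dc2.mul dV) w, pd_mul dc1 dX w, pd_mul dc2 dV w, e1, e2]
  ring

lemma pd_transport {g : PhasePt → ℝ} {p : PhasePt}
    (hg : ContDiffOn ℝ ∞ g posT) (hp : p ∈ posT) (w : PhasePt) :
    pd w (transportOp g) p
      = pd w (pd eT g) p
        + (w.2.2 0 * pd (eX 0) g p + p.2.2 0 * pd w (pd (eX 0) g) p)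
        + (w.2.2 1 * pd (eX 1) g p + p.2.2 1 * pd w (pd (eX 1) g) p)
        + (w.2.2 2 * pd (eX 2) g p + p.2.2 2 * pd w (pd (eX 2) g) p) := by
  have dT : DifferentiableAt ℝ (pd eT g) p := diffAt (contDiffOn_pd _ hg) hp
  have dX : ∀ i, DifferentiableAt ℝ (pd (eX i) g) p := fun i => diffAt (contDiffOn_pd _ hg) hp
  rw [transportOp_eq]
  have d0 : DifferentiableAt ℝ (fun q : PhasePt => q.2.2 0 * pd (eX 0) g q) p :=
    (diffAt_coordV 0 p).mul (dX 0)
  have d1 : DifferentiableAt ℝ (fun q : PhasePt => q.2.2 1 * pd (eX 1) g q) p :=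
    (diffAt_coordV 1 p).mul (dX 1)
  have d2 : DifferentiableAt ℝ (fun q : PhasePt => q.2.2 2 * pd (eX 2) g q) p :=
    (diffAt_coordV 2 p).mul (dX 2)
  rw [pd_add (b := fun q => q.2.2 0 * pd (eX 0) g q + q.2.2 1 * pd (eX 1) g q + q.2.2 2 * pd (eX 2) g q)
      dT ((d0.add d1).add d2) w,
    pd_add (a := fun q => q.2.2 0 * pd (eX 0) g q + q.2.2 1 * pd (eX 1) g q) (d0.add d1) d2 w, pd_add d0 d1 w,
    pd_mul (diffAt_coordV 0 p) (dX 0) w, pd_mul (diffAt_coordV 1 p) (dX 1) w,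
    pd_mul (diffAt_coordV 2 p) (dX 2) w, pd_coordV 0 w p, pd_coordV 1 w p, pd_coordV 2 w p]
  ring

lemma comm_base (δ : ℝ) (hδ : 1 ≤ δ) {g : PhasePt → ℝ} (hg : ContDiffOn ℝ ∞ g posT)
    {p : PhasePt} (hp : p ∈ posT) :
    transportOp (Hfield δ g) p - Hfield δ (transportOp g) p
      = δ * p.1 ^ (δ - 1) * pd (eV 0) g p := by
  have hδ1 : δ + 1 ≠ 0 := by intro h; linarith
  have hT : transportOp (Hfield δ g) p
      = pd eT (Hfield δ g) p + (p.2.2 0 * pd (eX 0) (Hfield δ g) p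
        + p.2.2 1 * pd (eX 1) (Hfield δ g) p + p.2.2 2 * pd (eX 2) (Hfield δ g) p) := by
    rw [transportOp_eq (Hfield δ g)]
  have hH : Hfield δ (transportOp g) p
      = p.1 ^ (δ + 1) / (δ + 1) * pd (eX 0) (transportOp g) p
        + p.1 ^ δ * pd (eV 0) (transportOp g) p := rfl
  rw [hT, hH, pd_Hfield δ hδ1 hg hp eT, pd_Hfield δ hδ1 hg hp (eX 0),
    pd_Hfield δ hδ1 hg hp (eX 1), pd_Hfield δ hδ1 hg hp (eX 2),
    pd_transport hg hp (eX 0), pd_transport hg hp (eV 0)]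
  have c1 : eT.1 = 1 := rfl
  have c2 : ∀ i, (eX i).1 = 0 := fun _ => rfl
  have c3 : ∀ i j, (eX i).2.2 j = 0 := fun _ _ => rfl
  have c4 : (eV 0).2.2 0 = 1 := rfl
  have c5 : (eV 0).2.2 1 = 0 := rfl
  have c6 : (eV 0).2.2 2 = 0 := rfl
  rw [c1, c2, c2, c2, c3, c3, c3, c4, c5, c6]
  rw [pd_comm hg hp (eX 0) eT, pd_comm hg hp (eX 0) (eX 1), pd_comm hg hp (eX 0) (eX 2),
    pd_comm hg hp (eV 0) eT, pd_comm hg hp (eV 0) (eX 0), pd_comm hg hp (eV 0) (eX 1),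
    pd_comm hg hp (eV 0) (eX 2)]
  ring


lemma Hfield_add (δ : ℝ) {u v : PhasePt → ℝ} {p : PhasePt}
    (du : DifferentiableAt ℝ u p) (dv : DifferentiableAt ℝ v p) :
    Hfield δ (fun q => u q + v q) p = Hfield δ u p + Hfield δ v p := by
  show p.1 ^ (δ + 1) / (δ + 1) * pd (eX 0) (fun q => u q + v q) p
      + p.1 ^ δ * pd (eV 0) (fun q => u q + v q) p
    = (p.1 ^ (δ + 1) / (δ + 1) * pd (eX 0) u p + p.1 ^ δ * pd (eV 0) u p)
      + (p.1 ^ (δ + 1) / (δ + 1) * pd (eX 0) v p + p.1 ^ δ * pd (eV 0) v p)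
  rw [pd_add du dv, pd_add du dv]
  ring

lemma Hfield_congr_on (δ : ℝ) {u v : PhasePt → ℝ} {p : PhasePt} (hp : p ∈ posT)
    (h : ∀ q ∈ posT, u q = v q) : Hfield δ u p = Hfield δ v p := by
  show p.1 ^ (δ + 1) / (δ + 1) * pd (eX 0) u p + p.1 ^ δ * pd (eV 0) u p
    = p.1 ^ (δ + 1) / (δ + 1) * pd (eX 0) v p + p.1 ^ δ * pd (eV 0) v p
  rw [pd_congr_on hp h (eX 0), pd_congr_on hp h (eV 0)]

lemma pd_const (c : ℝ) (w p : PhasePt) : pd w (fun _ : PhasePt => c) p = 0 := by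
  rw [pd, fderiv_fun_const]; rfl

lemma Hfield_tmul (δ C r : ℝ) {ψ : PhasePt → ℝ} {p : PhasePt} (hp : p ∈ posT)
    (hψ : DifferentiableAt ℝ ψ p) :
    Hfield δ (fun q => C * q.1 ^ r * ψ q) p = C * p.1 ^ r * Hfield δ ψ p := by
  have hp1 : (0:ℝ) < p.1 := hp
  have dc : DifferentiableAt ℝ (fun q : PhasePt => C * q.1 ^ r) p :=
    (diffAt_rpowFst hp1 r).const_mul C
  have hpdc : ∀ w : PhasePt, pd w (fun q : PhasePt => C * q.1 ^ r) p = C * (r * p.1 ^ (r-1) * w.1) := by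
    intro w
    rw [pd_mul (differentiableAt_const C) (diffAt_rpowFst hp1 r) w, pd_const C w p,
      pd_rpowFst hp1 r w]
    ring
  show p.1 ^ (δ + 1) / (δ + 1) * pd (eX 0) (fun q => C * q.1 ^ r * ψ q) p
      + p.1 ^ δ * pd (eV 0) (fun q => C * q.1 ^ r * ψ q) p
    = C * p.1 ^ r * (p.1 ^ (δ + 1) / (δ + 1) * pd (eX 0) ψ p + p.1 ^ δ * pd (eV 0) ψ p)
  rw [pd_mul dc hψ (eX 0), pd_mul dc hψ (eV 0), hpdc, hpdc,
    show (eX 0).1 = 0 from rfl, show (eV 0).1 = 0 from rfl]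
  ring

lemma pd_eV_Hfield (δ : ℝ) (hδ1 : δ + 1 ≠ 0) {h : PhasePt → ℝ} {p : PhasePt}
    (hh : ContDiffOn ℝ ∞ h posT) (hp : p ∈ posT) :
    pd (eV 0) (Hfield δ h) p = Hfield δ (pd (eV 0) h) p := by
  rw [pd_Hfield δ hδ1 hh hp (eV 0), pd_comm hh hp (eV 0) (eX 0),
    show (eV 0).1 = 0 from rfl]
  show _ = p.1 ^ (δ + 1) / (δ + 1) * pd (eX 0) (pd (eV 0) h) p
    + p.1 ^ δ * pd (eV 0) (pd (eV 0) h) p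
  ring

lemma contDiffOn_iter (δ : ℝ) (k : ℕ) {g : PhasePt → ℝ} (hg : ContDiffOn ℝ ∞ g posT) :
    ContDiffOn ℝ ∞ ((Hfield δ)^[k] g) posT := by
  induction k with
  | zero => simpa using hg
  | succ n ih => rw [Function.iterate_succ_apply']; exact contDiffOn_H δ ih

lemma main_aux (δ : ℝ) (hδ : 1 ≤ δ) {g : PhasePt → ℝ} (hg : ContDiffOn ℝ ∞ g posT) :
    ∀ m : ℕ, ∀ p : PhasePt, p ∈ posT →
      transportOp ((Hfield δ)^[m+1] g) p - (Hfield δ)^[m+1] (transportOp g) p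
        = δ * (m+1 : ℝ) * p.1 ^ (δ - 1) * pd (eV 0) ((Hfield δ)^[m] g) p := by
  have hδ1 : δ + 1 ≠ 0 := by intro h; linarith
  intro m
  induction m with
  | zero =>
    intro p hp
    simp only [zero_add, Function.iterate_one, Function.iterate_zero, id_eq, Nat.cast_zero]
    rw [comm_base δ hδ hg hp]
    ring
  | succ m ih =>
    intro p hp
    have hHm : ContDiffOn ℝ ∞ ((Hfield δ)^[m+1] g) posT := contDiffOn_iter δ (m+1) hg
    have hTg : ContDiffOn ℝ ∞ (transportOp g) posT := contDiffOn_T hg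
    have hψ : ContDiffOn ℝ ∞ (pd (eV 0) ((Hfield δ)^[m] g)) posT :=
      contDiffOn_pd _ (contDiffOn_iter δ m hg)
    have hA : transportOp ((Hfield δ)^[m+1+1] g) p
        - Hfield δ (transportOp ((Hfield δ)^[m+1] g)) p
        = δ * p.1 ^ (δ - 1) * pd (eV 0) ((Hfield δ)^[m+1] g) p := by
      rw [Function.iterate_succ_apply' (Hfield δ) (m+1) g]
      exact comm_base δ hδ hHm hp
    have hB : Hfield δ (transportOp ((Hfield δ)^[m+1] g)) p
        - Hfield δ ((Hfield δ)^[m+1] (transportOp g)) p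
        = δ * (m+1 : ℝ) * p.1 ^ (δ - 1) * pd (eV 0) ((Hfield δ)^[m+1] g) p := by
      have step1 : Hfield δ (transportOp ((Hfield δ)^[m+1] g)) p
          = Hfield δ (fun q => (Hfield δ)^[m+1] (transportOp g) q
              + (δ * (m+1 : ℝ)) * q.1 ^ (δ - 1) * pd (eV 0) ((Hfield δ)^[m] g) q) p := by
        refine Hfield_congr_on δ hp (fun q hq => ?_)
        have h := ih q hq
        linarith
      have du : DifferentiableAt ℝ ((Hfield δ)^[m+1] (transportOp g)) p :=
        diffAt (contDiffOn_iter δ (m+1) hTg) hp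
      have dv : DifferentiableAt ℝ
          (fun q => (δ * (m+1 : ℝ)) * q.1 ^ (δ - 1) * pd (eV 0) ((Hfield δ)^[m] g) q) p :=
        (((diffAt_rpowFst (hp : (0:ℝ) < p.1) (δ-1)).const_mul _).mul (diffAt hψ hp))
      rw [step1, Hfield_add δ du dv,
        Hfield_tmul δ (δ * (m+1 : ℝ)) (δ-1) hp (diffAt hψ hp),
        pd_eV_Hfield δ hδ1 (contDiffOn_iter δ m hg) hp |>.symm]
      rw [show Hfield δ ((Hfield δ)^[m] g) = (Hfield δ)^[m+1] g from
        (Function.iterate_succ_apply' (Hfield δ) m g).symm]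
      ring
    have key : transportOp ((Hfield δ)^[m+1+1] g) p - (Hfield δ)^[m+1+1] (transportOp g) p
        = (transportOp ((Hfield δ)^[m+1+1] g) p
            - Hfield δ (transportOp ((Hfield δ)^[m+1] g)) p)
          + (Hfield δ (transportOp ((Hfield δ)^[m+1] g)) p
            - Hfield δ ((Hfield δ)^[m+1] (transportOp g)) p) := by
      rw [Function.iterate_succ_apply' (Hfield δ) (m+1) (transportOp g)]
      ring
    rw [key, hA, hB]
    push_cast
    ring

end CommAux

/-- **Commutator of the transport operator with powers of `H_δ`.**
For `δ ≥ 1`, `k ≥ 1` and `f` smooth on `(0,∞) × ℝ³ × ℝ³`, at every point with `t > 0` one has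
`[T, H_δ^k] f = T(H_δ^k f) − H_δ^k(T f) = δ k t^{δ−1} ∂_{v₁}(H_δ^{k−1} f)`. -/
theorem transport_Hfield_pow_commutator (δ : ℝ) (hδ : 1 ≤ δ) (k : ℕ) (hk : 1 ≤ k)
    (f : PhasePt → ℝ) (hf : ContDiffOn ℝ (⊤ : ℕ∞) f {p : PhasePt | 0 < p.1})
    (p : PhasePt) (hp : 0 < p.1) :
    transportOp ((Hfield δ)^[k] f) p - (Hfield δ)^[k] (transportOp f) p
      = δ * k * p.1 ^ (δ - 1) * pV 0 ((Hfield δ)^[k - 1] f) p := by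
  obtain ⟨m, rfl⟩ : ∃ m, k = m + 1 := ⟨k - 1, (Nat.succ_pred_eq_of_pos hk).symm⟩
  have hg : ContDiffOn ℝ ∞ f CommAux.posT := hf.of_le (by simp)
  have h := CommAux.main_aux δ hδ hg m p hp
  rw [Nat.add_sub_cancel]
  push_cast
  exact h
end

section
/- Let 0 < s < 1. There exists a constant R_s > 0, depending only on s, such that for every integer j ≥ 1 and every v ∈ ℝ³, Σ_{i=1}^{3} |∂_{v_i}^j ⟨v⟩^{2/(1−s)}| ≤ ⟨v⟩^{2/(1−s) − 1} · R_s^j · j!, where ∂_{v_i}^j denotes the j-th partial derivative in the i-th coordinate of v. -/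
/-!
Fix `c > 0`, write `⟨σ⟩ = (c + σ²)^{1/2}` and `u = σ / ⟨σ⟩ ∈ [-1, 1]`. Since
`d/dσ (⟨σ⟩^{2q} R(u)) = ⟨σ⟩^{2q-1} (2q u R(u) + (1 - u²) R'(u))`,
the `j`-th derivative of `⟨σ⟩^{2p}` is `⟨σ⟩^{2p-j} R_j(u)` for a polynomial `R_j` of degree
at most `j` that does not depend on `c`. Its coefficients are bounded by `(2|p| + 3)^j j!`,
hence `|R_j(u)| ≤ (2|p| + 3)^j (j+1)!`. Along the `i`-th coordinate `⟨v⟩²` has this form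
with `c = 1 + ∑_{m ≠ i} v_m²`, and `⟨v⟩^{2p-j} ≤ ⟨v⟩^{2p-1}` for `j ≥ 1`.
-/

open Finset Polynomial

noncomputable def rpowDerivStep (q : ℝ) (R : ℝ[X]) : ℝ[X] :=
  C (2 * q) * X * R + (1 - X ^ 2) * derivative R

noncomputable def rpowDerivPoly (p : ℝ) : ℕ → ℝ[X]
  | 0 => 1
  | j + 1 => rpowDerivStep (p - j / 2) (rpowDerivPoly p j)

section CoeffBounds

variable {R : ℝ[X]} {n : ℕ} {B : ℝ}

lemma natDegree_rpowDerivStep_le (q : ℝ) (hn : R.natDegree ≤ n) :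
    (rpowDerivStep q R).natDegree ≤ n + 1 := by
  refine natDegree_add_le_of_degree_le ?_ ?_
  · calc (C (2 * q) * X * R).natDegree ≤ (C (2 * q) * X).natDegree + R.natDegree :=
          natDegree_mul_le
      _ ≤ 1 + n := add_le_add (by compute_degree) hn
      _ = n + 1 := add_comm 1 n
  · rcases Nat.eq_zero_or_pos R.natDegree with h0 | hpos
    · simp [derivative_of_natDegree_zero h0]
    · calc ((1 - X ^ 2) * derivative R).natDegree
            ≤ (1 - X ^ 2 : ℝ[X]).natDegree + (derivative R).natDegree := natDegree_mul_le
        _ ≤ 2 + (R.natDegree - 1) := by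
            gcongr
            · compute_degree
            · exact natDegree_derivative_le R
        _ ≤ n + 1 := by omega

lemma abs_coeff_X_pow_mul_le (hB : ∀ i, |R.coeff i| ≤ B) (k i : ℕ) :
    |(X ^ k * R).coeff i| ≤ B := by
  rw [coeff_X_pow_mul']
  split_ifs
  · exact hB _
  · simpa using (abs_nonneg _).trans (hB 0)

lemma abs_coeff_derivative_le (hn : R.natDegree ≤ n) (hB : ∀ i, |R.coeff i| ≤ B) (i : ℕ) :
    |(derivative R).coeff i| ≤ n * B := by
  rw [coeff_derivative, abs_mul, mul_comm (n : ℝ)]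
  by_cases hi : i + 1 ≤ n
  · have hi' : |(i : ℝ) + 1| ≤ n := by
      rw [abs_of_nonneg (by positivity)]
      exact_mod_cast hi
    exact mul_le_mul (hB _) hi' (abs_nonneg _) ((abs_nonneg _).trans (hB 0))
  · rw [coeff_eq_zero_of_natDegree_lt (by omega), abs_zero, zero_mul]
    exact mul_nonneg ((abs_nonneg _).trans (hB 0)) n.cast_nonneg

lemma abs_coeff_rpowDerivStep_le (q : ℝ) (hn : R.natDegree ≤ n) (hB : ∀ i, |R.coeff i| ≤ B)
    (i : ℕ) : |(rpowDerivStep q R).coeff i| ≤ (2 * |q| + 2 * n) * B := by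
  have hX : |(X * R).coeff i| ≤ B := by simpa using abs_coeff_X_pow_mul_le hB 1 i
  have hD := abs_coeff_derivative_le hn hB i
  have hXD := abs_coeff_X_pow_mul_le (abs_coeff_derivative_le hn hB) 2 i
  have hexp : rpowDerivStep q R
      = C (2 * q) * (X * R) + (derivative R - X ^ 2 * derivative R) := by
    rw [rpowDerivStep]
    ring
  rw [hexp, coeff_add, coeff_sub, coeff_C_mul]
  calc _ ≤ |2 * q| * |(X * R).coeff i| + (|(derivative R).coeff i|
          + |(X ^ 2 * derivative R).coeff i|) := by
        refine (abs_add_le _ _).trans ?_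
        rw [abs_mul]
        gcongr
        exact abs_sub _ _
    _ ≤ 2 * |q| * B + (n * B + n * B) := by
        rw [abs_mul, abs_two]
        gcongr
    _ = _ := by ring

lemma abs_eval_le (hn : R.natDegree ≤ n) (hB : ∀ i, |R.coeff i| ≤ B) {u : ℝ} (hu : |u| ≤ 1) :
    |R.eval u| ≤ (n + 1) * B := by
  rw [eval_eq_sum_range' (Nat.lt_succ_of_le hn)]
  calc |∑ i ∈ range (n + 1), R.coeff i * u ^ i| ≤ ∑ i ∈ range (n + 1), |R.coeff i * u ^ i| :=
        abs_sum_le_sum_abs _ _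
    _ ≤ ∑ _i ∈ range (n + 1), B := by
        gcongr with i
        rw [abs_mul, abs_pow]
        exact (mul_le_of_le_one_right (abs_nonneg _) (pow_le_one₀ (abs_nonneg u) hu)).trans
          (hB i)
    _ = (n + 1) * B := by simp

end CoeffBounds

lemma natDegree_rpowDerivPoly_le (p : ℝ) (j : ℕ) : (rpowDerivPoly p j).natDegree ≤ j := by
  induction j with
  | zero => simp [rpowDerivPoly]
  | succ j ih => exact natDegree_rpowDerivStep_le _ ih

lemma abs_coeff_rpowDerivPoly_le (p : ℝ) (j i : ℕ) :
    |(rpowDerivPoly p j).coeff i| ≤ (2 * |p| + 3) ^ j * j.factorial := by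
  induction j generalizing i with
  | zero =>
    rw [rpowDerivPoly, coeff_one]
    split_ifs <;> simp
  | succ j ih =>
    have hgrowth : 2 * |p - j / 2| + 2 * j ≤ (2 * |p| + 3) * (j + 1) := by
      have habs : |p - j / 2| ≤ |p| + j / 2 := by
        simpa [abs_of_nonneg (by positivity : (0 : ℝ) ≤ j / 2)] using abs_sub p (j / 2 : ℝ)
      nlinarith [abs_nonneg p, (j.cast_nonneg : (0 : ℝ) ≤ j)]
    calc _ ≤ (2 * |p - j / 2| + 2 * j) * ((2 * |p| + 3) ^ j * j.factorial) :=
          abs_coeff_rpowDerivStep_le _ (natDegree_rpowDerivPoly_le p j) ih i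
      _ ≤ (2 * |p| + 3) * (j + 1) * ((2 * |p| + 3) ^ j * j.factorial) := by gcongr
      _ = _ := by push_cast [Nat.factorial_succ]; ring

lemma hasDerivAt_rpow_mul_eval {c : ℝ} (hc : 0 < c) (q : ℝ) (R : ℝ[X]) (σ : ℝ) :
    HasDerivAt (fun σ => (c + σ ^ 2) ^ q * R.eval (σ / √(c + σ ^ 2)))
      ((c + σ ^ 2) ^ (q - 1 / 2) * (rpowDerivStep q R).eval (σ / √(c + σ ^ 2))) σ := by
  have hX : 0 < c + σ ^ 2 := by positivity
  have hbase : HasDerivAt (fun σ : ℝ => c + σ ^ 2) (2 * σ) σ := by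
    simpa using (hasDerivAt_pow 2 σ).const_add c
  have hsqrt := hbase.sqrt hX.ne'
  have hu := (hasDerivAt_id' σ).fun_div hsqrt (Real.sqrt_pos.2 hX).ne'
  refine ((hbase.rpow_const (p := q) (Or.inl hX.ne')).fun_mul
    ((R.hasDerivAt _).comp σ hu)).congr_deriv ?_
  have hs : 0 < √(c + σ ^ 2) := Real.sqrt_pos.2 hX
  have hs2 : c + σ ^ 2 = √(c + σ ^ 2) ^ 2 := (Real.sq_sqrt hX.le).symm
  rw [Real.rpow_sub_one hX.ne', Real.rpow_sub hX, ← Real.sqrt_eq_rpow]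
  simp only [rpowDerivStep, Function.comp_apply, eval_add, eval_mul, eval_C, eval_X, eval_sub,
    eval_one, eval_pow]
  generalize (c + σ ^ 2) ^ q = A
  generalize √(c + σ ^ 2) = s at hs hs2 ⊢
  rw [hs2]
  field_simp

lemma iterate_deriv_rpow_sq_add {c : ℝ} (hc : 0 < c) (p : ℝ) (j : ℕ) :
    deriv^[j] (fun σ => (c + σ ^ 2) ^ p) =
      fun σ => (c + σ ^ 2) ^ (p - j / 2) * (rpowDerivPoly p j).eval (σ / √(c + σ ^ 2)) := by
  induction j with
  | zero => simp [rpowDerivPoly]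
  | succ j ih =>
    rw [Function.iterate_succ_apply', ih]
    funext σ
    rw [(hasDerivAt_rpow_mul_eval hc _ _ σ).deriv, rpowDerivPoly]
    congr 2
    push_cast
    ring

lemma abs_div_sqrt_sq_add_le_one {c : ℝ} (hc : 0 ≤ c) (σ : ℝ) : |σ / √(c + σ ^ 2)| ≤ 1 := by
  rw [abs_div, abs_of_nonneg (Real.sqrt_nonneg _)]
  exact div_le_one_of_le₀ (Real.abs_le_sqrt (by linarith)) (Real.sqrt_nonneg _)

lemma abs_iterate_deriv_rpow_sq_add_le {c : ℝ} (hc : 0 < c) (p : ℝ) (j : ℕ) (σ : ℝ) :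
    |deriv^[j] (fun σ => (c + σ ^ 2) ^ p) σ|
      ≤ (c + σ ^ 2) ^ (p - j / 2) * ((2 * |p| + 3) ^ j * (j + 1).factorial) := by
  rw [iterate_deriv_rpow_sq_add hc, abs_mul, abs_of_nonneg (by positivity)]
  gcongr
  calc _ ≤ (j + 1) * ((2 * |p| + 3) ^ j * j.factorial) :=
        abs_eval_le (natDegree_rpowDerivPoly_le p j) (abs_coeff_rpowDerivPoly_le p j)
          (abs_div_sqrt_sq_add_le_one hc.le σ)
    _ = _ := by push_cast [Nat.factorial_succ]; ring

lemma sum_update_sq {ι : Type*} [Fintype ι] [DecidableEq ι] (v : ι → ℝ) (i : ι) (σ : ℝ) :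
    ∑ m, Function.update v i σ m ^ 2 = ∑ m, Function.update v i 0 m ^ 2 + σ ^ 2 := by
  have h : ∀ b, ∑ m, Function.update v i b m ^ 2 = b ^ 2 + ∑ m ∈ univ \ {i}, v m ^ 2 := by
    intro b
    simp_rw [Function.apply_update (fun _ x => x ^ 2) v i b]
    exact sum_update_of_mem (mem_univ i) _ _
  rw [h, h]
  ring

lemma abs_iterate_deriv_update_le {ι : Type*} [Fintype ι] [DecidableEq ι] (p : ℝ) {j : ℕ}
    (hj : 1 ≤ j) (v : ι → ℝ) (i : ι) :
    |deriv^[j] (fun σ => (1 + ∑ m, Function.update v i σ m ^ 2) ^ p) (v i)|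
      ≤ (1 + ∑ m, v m ^ 2) ^ (p - 1 / 2) * (2 * (2 * |p| + 3)) ^ j * j.factorial := by
  set c := 1 + ∑ m, Function.update v i 0 m ^ 2
  have hc : 1 ≤ c := le_add_of_nonneg_right (sum_nonneg fun m _ => sq_nonneg _)
  have hfun :
      (fun σ => (1 + ∑ m, Function.update v i σ m ^ 2) ^ p) = fun σ => (c + σ ^ 2) ^ p := by
    funext σ
    rw [sum_update_sq, add_assoc]
  have hX : 1 + ∑ m, v m ^ 2 = c + v i ^ 2 := by
    rw [← Function.update_eq_self i v, sum_update_sq, Function.update_eq_self, add_assoc]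
  have hfac : ((j + 1).factorial : ℝ) ≤ 2 ^ j * j.factorial := by
    rw [Nat.factorial_succ, Nat.cast_mul]
    gcongr
    exact_mod_cast Nat.lt_two_pow_self
  rw [hfun, hX]
  calc _ ≤ (c + v i ^ 2) ^ (p - j / 2) * ((2 * |p| + 3) ^ j * (j + 1).factorial) :=
        abs_iterate_deriv_rpow_sq_add_le (by linarith) p j (v i)
    _ ≤ (c + v i ^ 2) ^ (p - 1 / 2) * ((2 * |p| + 3) ^ j * (2 ^ j * j.factorial)) := by
        gcongr
        · nlinarith [sq_nonneg (v i)]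
        · exact_mod_cast hj
    _ = _ := by rw [mul_pow]; ring

theorem japanese_bracket_power_deriv_bound_general (s : ℝ) :
    ∃ R : ℝ, 0 < R ∧ ∀ j : ℕ, 1 ≤ j → ∀ v : Fin 3 → ℝ,
      ∑ i : Fin 3,
          |deriv^[j]
              (fun σ : ℝ => (1 + ∑ m : Fin 3, Function.update v i σ m ^ 2) ^ (1 / (1 - s)))
              (v i)|
        ≤ (1 + ∑ m : Fin 3, v m ^ 2) ^ ((2 / (1 - s) - 1) / 2) * R ^ j * (j.factorial : ℝ) := by
  set p := 1 / (1 - s)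
  refine ⟨3 * (2 * (2 * |p| + 3)), by positivity, fun j hj v => ?_⟩
  have hexp : (2 / (1 - s) - 1) / 2 = p - 1 / 2 := by ring
  rw [hexp]
  set bound := (1 + ∑ m, v m ^ 2) ^ (p - 1 / 2) * (2 * (2 * |p| + 3)) ^ j * j.factorial
  calc _ ≤ ∑ _i : Fin 3, bound := sum_le_sum fun i _ => abs_iterate_deriv_update_le p hj v i
    _ ≤ 3 ^ j * bound := by
        rw [sum_const, card_univ, Fintype.card_fin, nsmul_eq_mul, Nat.cast_ofNat]
        gcongr
        exact le_self_pow₀ (by norm_num) (by omega)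
    _ = _ := by rw [mul_pow 3]; ring

/-- **Derivative bounds for the weight `⟨v⟩^{2/(1−s)}`.**
For `0 < s < 1` there is `R_s > 0` such that for every `j ≥ 1` and `v ∈ ℝ³`,
`Σᵢ |∂_{vᵢ}ʲ ⟨v⟩^{2/(1−s)}| ≤ ⟨v⟩^{2/(1−s)−1} R_sʲ j!`, where `⟨v⟩^p = (1+|v|²)^{p/2}` and
`∂_{vᵢ}ʲ` is the `j`-th partial derivative in the `i`-th coordinate. -/
theorem japanese_bracket_power_deriv_bound (s : ℝ) (hs0 : 0 < s) (hs1 : s < 1) :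
    ∃ R : ℝ, 0 < R ∧ ∀ j : ℕ, 1 ≤ j → ∀ v : Fin 3 → ℝ,
      ∑ i : Fin 3,
          |deriv^[j]
              (fun σ : ℝ => (1 + ∑ m : Fin 3, Function.update v i σ m ^ 2) ^ (1 / (1 - s)))
              (v i)|
        ≤ (1 + ∑ m : Fin 3, v m ^ 2) ^ ((2 / (1 - s) - 1) / 2) * R ^ j * (j.factorial : ℝ) :=
  japanese_bracket_power_deriv_bound_general s
end

section
/- There exists an absolute constant C > 0 such that for every R > 0, every ρ ≥ 2R, and every integer k ≥ 1: Σ_{j=1}^{k} ( k!/(k−j)! ) · R^j · ( ρ^{k−j} (k−j)! / (k−j+1)³ ) ≤ C · R · ρ^{k−1} · k! / (k+1)³. -/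
lemma aux_geom (n : ℕ) :
    ∑ i ∈ Finset.range (n + 1), (2 : ℝ) ^ i / ((i : ℝ) + 1) ^ 3
      ≤ 64 * 2 ^ n / ((n : ℝ) + 1) ^ 3 := by
  rcases le_or_gt n 2 with h | h
  · interval_cases n <;> norm_num [Finset.sum_range_succ]
  · have h3 : 3 ≤ n := h
    clear h
    induction n, h3 using Nat.le_induction with
    | base => norm_num [Finset.sum_range_succ]
    | succ n hn ih =>
      rw [Finset.sum_range_succ]
      push_cast
      have hx : (3 : ℝ) ≤ (n : ℝ) := by exact_mod_cast hn
      have h2n : (0 : ℝ) < 2 ^ n := by positivity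
      have hpoly : 64 * ((n:ℝ) + 2) ^ 3 ≤ 126 * ((n:ℝ) + 1) ^ 3 := by
        nlinarith [hx, sq_nonneg ((n:ℝ) - 3),
          mul_nonneg (mul_nonneg (sub_nonneg.2 hx) (sub_nonneg.2 hx)) (sub_nonneg.2 hx)]
      have key : 64 * (2 : ℝ) ^ n / ((n : ℝ) + 1) ^ 3
          ≤ 126 * 2 ^ n / ((n : ℝ) + 1 + 1) ^ 3 := by
        rw [div_le_div_iff₀ (by positivity) (by positivity)]
        nlinarith [mul_le_mul_of_nonneg_left hpoly h2n.le]
      have e1 : (2 : ℝ) ^ (n + 1) / ((n : ℝ) + 1 + 1) ^ 3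
          = 2 * (2 ^ n / ((n : ℝ) + 1 + 1) ^ 3) := by rw [pow_succ]; ring
      have e2 : 64 * (2 : ℝ) ^ (n + 1) / ((n : ℝ) + 1 + 1) ^ 3
          = 128 * (2 ^ n / ((n : ℝ) + 1 + 1) ^ 3) := by rw [pow_succ]; ring
      have e3 : 126 * (2:ℝ) ^ n / ((n : ℝ) + 1 + 1) ^ 3
          = 126 * (2 ^ n / ((n : ℝ) + 1 + 1) ^ 3) := by ring
      rw [e1, e2]
      rw [e3] at key
      linarith [ih, key]

lemma sum_half_pow (k : ℕ) (hk : 1 ≤ k) :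
    ∑ j ∈ Finset.Icc 1 k, ((1 : ℝ) / 2) ^ (j - 1) / (((k - j : ℕ) : ℝ) + 1) ^ 3
      ≤ 512 / ((k : ℝ) + 1) ^ 3 := by
  have h1 : ∑ j ∈ Finset.Icc 1 k, ((1 : ℝ) / 2) ^ (j - 1) / (((k - j : ℕ) : ℝ) + 1) ^ 3
      = ∑ i ∈ Finset.range k, ((1 : ℝ) / 2) ^ i / (((k - 1 - i : ℕ) : ℝ) + 1) ^ 3 := by
    refine Finset.sum_bij' (fun j _ => j - 1) (fun i _ => i + 1) ?_ ?_ ?_ ?_ ?_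
    · intro a ha
      simp only [Finset.mem_Icc] at ha
      simp only [Finset.mem_range]
      omega
    · intro a ha
      simp only [Finset.mem_range] at ha
      simp only [Finset.mem_Icc]
      omega
    · intro a ha
      simp only [Finset.mem_Icc] at ha
      show a - 1 + 1 = a
      omega
    · intro a ha
      show a + 1 - 1 = a
      omega
    · intro a ha
      simp only [Finset.mem_Icc] at ha
      show ((1:ℝ)/2) ^ (a - 1) / (((k - a : ℕ) : ℝ) + 1) ^ 3
          = ((1:ℝ)/2) ^ (a - 1) / (((k - 1 - (a - 1) : ℕ) : ℝ) + 1) ^ 3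
      rw [show k - 1 - (a - 1) = k - a from by omega]
  have h2 : ∑ i ∈ Finset.range k, ((1 : ℝ) / 2) ^ (k - 1 - i) / (((k - 1 - (k - 1 - i) : ℕ) : ℝ) + 1) ^ 3
      = ∑ i ∈ Finset.range k, ((1 : ℝ) / 2) ^ i / (((k - 1 - i : ℕ) : ℝ) + 1) ^ 3 :=
    Finset.sum_range_reflect (fun i => ((1 : ℝ) / 2) ^ i / (((k - 1 - i : ℕ) : ℝ) + 1) ^ 3) k
  have h3 : ∀ i ∈ Finset.range k, ((1 : ℝ) / 2) ^ (k - 1 - i) / (((k - 1 - (k - 1 - i) : ℕ) : ℝ) + 1) ^ 3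
      = (1 / 2) ^ (k - 1) * ((2 : ℝ) ^ i / ((i : ℝ) + 1) ^ 3) := by
    intro i hi
    simp only [Finset.mem_range] at hi
    have e : k - 1 - (k - 1 - i) = i := by omega
    have e2 : (k - 1 : ℕ) = (k - 1 - i) + i := by omega
    have hone : ((1:ℝ)/2) ^ i * (2:ℝ) ^ i = 1 := by
      rw [← mul_pow]; norm_num
    have hkey : ((1:ℝ)/2) ^ (k - 1) * (2:ℝ) ^ i = ((1:ℝ)/2) ^ (k - 1 - i) := by
      calc ((1:ℝ)/2) ^ (k - 1) * (2:ℝ) ^ i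
          = ((1:ℝ)/2) ^ (k - 1 - i) * (((1:ℝ)/2) ^ i * (2:ℝ) ^ i) := by
            rw [← mul_assoc, ← pow_add, ← e2]
        _ = ((1:ℝ)/2) ^ (k - 1 - i) := by rw [hone, mul_one]
    rw [e, ← hkey]
    ring
  rw [h1, ← h2, Finset.sum_congr rfl h3, ← Finset.mul_sum]
  have hk1 : k = (k - 1) + 1 := by omega
  have haux := aux_geom (k - 1)
  rw [← hk1] at haux
  have hc : ((k - 1 : ℕ) : ℝ) + 1 = (k : ℝ) := by
    have : ((k - 1 : ℕ) : ℝ) = (k : ℝ) - 1 := by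
      push_cast [hk]; ring
    rw [this]; ring
  rw [hc] at haux
  have hkpos : (0 : ℝ) < (k : ℝ) := by exact_mod_cast hk
  have hhalf : (0 : ℝ) ≤ ((1 : ℝ) / 2) ^ (k - 1) := by positivity
  calc ((1:ℝ)/2) ^ (k-1) * ∑ i ∈ Finset.range k, (2 : ℝ) ^ i / ((i : ℝ) + 1) ^ 3
      ≤ ((1:ℝ)/2) ^ (k-1) * (64 * 2 ^ (k-1) / (k : ℝ) ^ 3) :=
        mul_le_mul_of_nonneg_left haux hhalf
    _ = 64 / (k : ℝ) ^ 3 := by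
        rw [div_pow, one_pow]
        field_simp
    _ ≤ 512 / ((k : ℝ) + 1) ^ 3 := by
        rw [div_le_div_iff₀ (by positivity) (by positivity)]
        nlinarith [hkpos, sq_nonneg ((k:ℝ) - 1)]



/-- **Factorial–geometric sum bound.**
There is an absolute constant `C > 0` such that for every `R > 0`, `ρ ≥ 2R` and `k ≥ 1`:
`Σ_{j=1}^{k} (k!/(k−j)!) Rʲ (ρ^{k−j}(k−j)!/(k−j+1)³) ≤ C R ρ^{k−1} k!/(k+1)³`. -/
theorem factorial_geometric_sum_bound :
    ∃ C : ℝ, 0 < C ∧ ∀ R ρ : ℝ, 0 < R → 2 * R ≤ ρ → ∀ k : ℕ, 1 ≤ k →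
      ∑ j ∈ Finset.Icc 1 k,
          ((k.factorial : ℝ) / ((k - j).factorial : ℝ)) * R ^ j
            * (ρ ^ (k - j) * ((k - j).factorial : ℝ) / (((k - j : ℕ) : ℝ) + 1) ^ 3)
        ≤ C * R * ρ ^ (k - 1) * (k.factorial : ℝ) / ((k : ℝ) + 1) ^ 3 := by
  refine ⟨512, by norm_num, ?_⟩
  intro R ρ hR hρ k hk
  have hρ0 : (0 : ℝ) < ρ := lt_of_lt_of_le (by linarith) hρ
  have hRhalf : R ≤ ρ / 2 := by linarith
  have hstep : ∀ j ∈ Finset.Icc 1 k,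
      ((k.factorial : ℝ) / ((k - j).factorial : ℝ)) * R ^ j
          * (ρ ^ (k - j) * ((k - j).factorial : ℝ) / (((k - j : ℕ) : ℝ) + 1) ^ 3)
        ≤ (k.factorial : ℝ) * (R * ρ ^ (k - 1))
            * (((1 : ℝ) / 2) ^ (j - 1) / (((k - j : ℕ) : ℝ) + 1) ^ 3) := by
    intro j hj
    simp only [Finset.mem_Icc] at hj
    have hfac : ((k - j).factorial : ℝ) ≠ 0 := by positivity
    have hd : (0 : ℝ) < (((k - j : ℕ) : ℝ) + 1) ^ 3 := by positivity
    have heq : ((k.factorial : ℝ) / ((k - j).factorial : ℝ)) * R ^ j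
          * (ρ ^ (k - j) * ((k - j).factorial : ℝ) / (((k - j : ℕ) : ℝ) + 1) ^ 3)
        = (k.factorial : ℝ) * (R ^ j * ρ ^ (k - j)) / (((k - j : ℕ) : ℝ) + 1) ^ 3 := by
      field_simp
    rw [heq]
    have hpow : R ^ j * ρ ^ (k - j) ≤ R * ρ ^ (k - 1) * ((1 : ℝ) / 2) ^ (j - 1) := by
      have h1 : R ^ j = R * R ^ (j - 1) := by
        conv_lhs => rw [show j = 1 + (j - 1) from by omega]
        rw [pow_add, pow_one]
      have h2 : R ^ (j - 1) ≤ (ρ / 2) ^ (j - 1) :=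
        pow_le_pow_left₀ hR.le hRhalf _
      have h3 : (ρ / 2) ^ (j - 1) * ρ ^ (k - j) = ρ ^ (k - 1) * ((1 : ℝ) / 2) ^ (j - 1) := by
        rw [div_pow, div_pow, one_pow,
          show ρ ^ (k - 1) = ρ ^ (j - 1) * ρ ^ (k - j) from by
            rw [← pow_add]; congr 1; omega]
        ring
      calc R ^ j * ρ ^ (k - j) = R * (R ^ (j - 1) * ρ ^ (k - j)) := by rw [h1]; ring
        _ ≤ R * ((ρ / 2) ^ (j - 1) * ρ ^ (k - j)) := by
            apply mul_le_mul_of_nonneg_left _ hR.le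
            exact mul_le_mul_of_nonneg_right h2 (by positivity)
        _ = R * ρ ^ (k - 1) * ((1 : ℝ) / 2) ^ (j - 1) := by rw [h3]; ring
    calc (k.factorial : ℝ) * (R ^ j * ρ ^ (k - j)) / (((k - j : ℕ) : ℝ) + 1) ^ 3
        ≤ (k.factorial : ℝ) * (R * ρ ^ (k - 1) * ((1 : ℝ) / 2) ^ (j - 1))
            / (((k - j : ℕ) : ℝ) + 1) ^ 3 := by
          gcongr
      _ = (k.factorial : ℝ) * (R * ρ ^ (k - 1))
            * (((1 : ℝ) / 2) ^ (j - 1) / (((k - j : ℕ) : ℝ) + 1) ^ 3) := by ring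
  calc ∑ j ∈ Finset.Icc 1 k,
        ((k.factorial : ℝ) / ((k - j).factorial : ℝ)) * R ^ j
          * (ρ ^ (k - j) * ((k - j).factorial : ℝ) / (((k - j : ℕ) : ℝ) + 1) ^ 3)
      ≤ ∑ j ∈ Finset.Icc 1 k, (k.factorial : ℝ) * (R * ρ ^ (k - 1))
          * (((1 : ℝ) / 2) ^ (j - 1) / (((k - j : ℕ) : ℝ) + 1) ^ 3) :=
        Finset.sum_le_sum hstep
    _ = (k.factorial : ℝ) * (R * ρ ^ (k - 1))
          * ∑ j ∈ Finset.Icc 1 k, ((1 : ℝ) / 2) ^ (j - 1) / (((k - j : ℕ) : ℝ) + 1) ^ 3 := by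
        rw [← Finset.mul_sum]
    _ ≤ (k.factorial : ℝ) * (R * ρ ^ (k - 1)) * (512 / ((k : ℝ) + 1) ^ 3) := by
        apply mul_le_mul_of_nonneg_left (sum_half_pow k hk) (by positivity)
    _ = 512 * R * ρ ^ (k - 1) * (k.factorial : ℝ) / ((k : ℝ) + 1) ^ 3 := by ring
end
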